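/- arXiv:1611.02822 — 2 statements merged into one kernel-verified Lean document; each statement's English description precedes it below -/
import Mathlib

section
/- Let P ∈ A = F_q[θ] be monic irreducible and s = (s_1,…,s_r) ∈ ℕ^r with P ∤ Γ_{s_1}⋯Γ_{s_r}. Define ζ_P(s) := Σ_{deg P > deg a_1 > ⋯ > deg a_r, a_i monic} ∏ a_i^{−s_i} mod P ∈ A/(P). Expand H_{s_i−1} = Σ_{j=0}^{m_i} u_{ij} t^j with u_{ij} ∈ A. Then ζ_P(s) = (1/Γ_s) Σ_{j = (j_1,…,j_r), 0 ≤ j_i ≤ m_i} θ^{j_1+⋯+j_r} · Σ_{deg P > i_1 > ⋯ > i_r ≥ 0} (u_{1 j_1}^{q^{i_1}} ⋯ u_{r j_r}^{q^{i_r}})/(L_{i_1}^{s_1}⋯L_{i_r}^{s_r}) mod P, where Γ_s := Γ_{s_1}⋯Γ_{s_r}. -/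
open Polynomial

noncomputable section

variable (Fq : Type) [Field Fq] [Fintype Fq]

/-- `D_0 = 1` and `D_i = ∏_{j=0}^{i-1} (θ^{q^i} - θ^{q^j})` in `A = F_q[θ]`. -/
def carlitzD (i : ℕ) : Polynomial Fq :=
  ∏ j ∈ Finset.range i, ((X : Polynomial Fq) ^ (Fintype.card Fq) ^ i - X ^ (Fintype.card Fq) ^ j)

/-- `L_0 = 1` and `L_i = ∏_{j=1}^{i} (θ - θ^{q^j})` in `A = F_q[θ]`. -/
def carlitzL (i : ℕ) : Polynomial Fq :=
  ∏ j ∈ Finset.Icc 1 i, ((X : Polynomial Fq) - X ^ (Fintype.card Fq) ^ j)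

/-- The Carlitz factorial `Γ_m` (for `m ≥ 1`): writing `m - 1 = Σ n_i q^i` in base `q`,
`Γ_m = ∏ D_i^{n_i}`.  (The `i`-th base-`q` digit of `m - 1` is `(m-1)/q^i % q`.) -/
def carlitzΓ (m : ℕ) : Polynomial Fq :=
  ∏ i ∈ Finset.range m,
    (carlitzD Fq i) ^ ((m - 1) / (Fintype.card Fq) ^ i % (Fintype.card Fq))

/-- The ambient polynomial ring `F_q[θ, t]`, with `θ = X 0` and `t = X 1`. -/
abbrev ATRing := MvPolynomial (Fin 2) Fq

/-- `θ` as an element of `F_q[θ, t]`. -/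
def θS : ATRing Fq := MvPolynomial.X 0

/-- `t` as an element of `F_q[θ, t]`. -/
def tS : ATRing Fq := MvPolynomial.X 1

/-- `G_0(θ) = 1` and `G_n(θ) = ∏_{i=1}^{n} (t^{q^n} - θ^{q^i}) ∈ F_q[t, θ]`
(the polynomial `G_n(y)` evaluated at `y = θ`). -/
def ATG (n : ℕ) : ATRing Fq :=
  ∏ i ∈ Finset.Icc 1 n, (tS Fq ^ (Fintype.card Fq) ^ n - θS Fq ^ (Fintype.card Fq) ^ i)

/-- Inclusion `F_q[θ] → F_q[θ, t]`. -/
def toSθ : Polynomial Fq →+* ATRing Fq :=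
  Polynomial.eval₂RingHom MvPolynomial.C (θS Fq)

/-- The substitution `θ ↦ t`, `F_q[θ] → F_q[θ, t]` (used for `D_i|_{θ=t}` and
`Γ_{n+1}|_{θ=t}`). -/
def toSt : Polynomial Fq →+* ATRing Fq :=
  Polynomial.eval₂RingHom MvPolynomial.C (tS Fq)

/-- Inclusion `A[t] = F_q[θ][t] → F_q[θ, t]`. -/
def toS₂ : Polynomial (Polynomial Fq) →+* ATRing Fq :=
  Polynomial.eval₂RingHom (toSθ Fq) (tS Fq)

/-- Inclusion of `F_q[θ, t]` into its fraction field. -/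
def ιF : ATRing Fq →+* FractionRing (ATRing Fq) :=
  algebraMap (ATRing Fq) (FractionRing (ATRing Fq))

/-- `H : ℕ → A[t]` is the family of Anderson–Thakur polynomials iff it satisfies the
generating identity
`(1 - Σ_{i≥0} (G_i(θ)/D_i|_{θ=t}) x^{q^i}) ⁻¹ = Σ_{n≥0} (H_n/Γ_{n+1}|_{θ=t}) x^n`,
i.e. the product of the two series is `1`, in the power series ring over the fraction
field of `F_q[θ, t]`. -/
def IsATFamily (H : ℕ → Polynomial (Polynomial Fq)) : Prop :=
  (1 - PowerSeries.mk fun N => ∑ i ∈ Finset.range (N + 1),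
      if (Fintype.card Fq) ^ i = N then
        ιF Fq (ATG Fq i) / ιF Fq (toSt Fq (carlitzD Fq i)) else 0) *
    (PowerSeries.mk fun n =>
      ιF Fq (toS₂ Fq (H n)) / ιF Fq (toSt Fq (carlitzΓ Fq (n + 1)))) = 1

/-- For `H = Σ_j u_j t^j ∈ A[t]`, the twist-and-evaluate `H^{(i)}|_{t=θ} = Σ_j u_j^{q^i} θ^j ∈ A`,
where `H^{(i)} := Σ_j u_j^{q^i} t^j`. -/
def twistEval (H : Polynomial (Polynomial Fq)) (i : ℕ) : Polynomial Fq :=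
  ∑ j ∈ Finset.range (H.natDegree + 1), (H.coeff j) ^ (Fintype.card Fq) ^ i * X ^ j

/-!
Everything reduces to one degree `d < deg P` at a time. The monic polynomials of degree `d` are
the roots of `e_d(X) - D_d`, where `e_d = ∏_{deg a < d} (X - a) = ∑_j c_{d,j} X^{q^j}` is the
`𝔽_q`-linear Carlitz polynomial. As `e_d' = c_{d,0}` is constant, the logarithmic derivative of
`e_d - D_d` yields a linear recursion in `s` for the power sums `S_d(s) = ∑_{deg b = d} b^{-s}`,
with weights `c_{d,j} / D_d`. Specialising the Anderson–Thakur generating function along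
`θ ↦ θ^{q^d}, t ↦ θ` gives, through `c_{d,j} D_j L_{d-j}^{q^j} = D_d`, the same recursion for
`H_{s-1}^{(d)}|_{t=θ} / (Γ_s L_d^s)`; hence the two agree in `A/(P)`. The hypothesis
`P ∤ Γ_s` keeps every denominator invertible (`D_i ∣ D_{i'}` for `i ≤ i'`, and
`D_d = ±∏_{deg b = d} b`), and the multiple sum factors over the strictly decreasing degree
vectors.
-/

open Finset

local notation "q" => Fintype.card Fq

section FqAlgebra

variable {Fq} {R : Type*} [CommRing R] [Algebra Fq R]

theorem frobeniusAlgHom_pow_apply (j : ℕ) (x : R) :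
    (FiniteField.frobeniusAlgHom Fq R ^ j) x = x ^ q ^ j := by
  rw [AlgHom.coe_pow, FiniteField.coe_frobeniusAlgHom, pow_iterate]

theorem sub_pow_card_pow (j : ℕ) (x y : R) : (x - y) ^ q ^ j = x ^ q ^ j - y ^ q ^ j := by
  simpa only [frobeniusAlgHom_pow_apply] using map_sub (FiniteField.frobeniusAlgHom Fq R ^ j) x y

theorem sum_pow_card {ι : Type*} (s : Finset ι) (f : ι → R) :
    (∑ i ∈ s, f i) ^ q = ∑ i ∈ s, f i ^ q := by
  have h := map_sum (FiniteField.frobeniusAlgHom Fq R) f s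
  simp only [FiniteField.frobeniusAlgHom_apply] at h
  exact h

theorem natCast_card_eq_zero : (q : R) = 0 := by
  rw [← map_natCast (algebraMap Fq R), FiniteField.cast_card_eq_zero, map_zero]

variable (Fq) in
theorem prod_X_sub_C_univ : ∏ c : Fq, (X - C c) = (X ^ q - X : Fq[X]) := by
  have hq : 1 < q := Fintype.one_lt_card
  have hm : (X ^ q - X : Fq[X]).Monic := monic_X_pow_sub (by rw [degree_X]; exact_mod_cast hq)
  have h := prod_multiset_X_sub_C_of_monic_of_roots_card_eq hm (by
    rw [FiniteField.roots_X_pow_card_sub_X, FiniteField.X_pow_card_sub_X_natDegree_eq _ hq]; rfl)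
  rwa [FiniteField.roots_X_pow_card_sub_X] at h

theorem prod_sub_smul (z w : R) : ∏ c : Fq, (z - c • w) = z ^ q - w ^ (q - 1) * z := by
  have h := congrArg (fun p : Fq[X] => MvPolynomial.aeval ![z, w] (homogenize p q))
    (prod_X_sub_C_univ Fq)
  have hprod := homogenize_finsetProd (s := univ) (p := fun c : Fq => X - C c) (n := fun _ => 1)
    fun c _ => natDegree_X_sub_C_le c
  rw [sum_const, card_univ, smul_eq_mul, mul_one] at hprod
  rw [hprod] at h
  simp only [homogenize_X_pow le_rfl, homogenize_X Fintype.card_ne_zero, homogenize_sub,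
    homogenize_C, map_prod, map_sub, map_mul, map_pow, MvPolynomial.aeval_X,
    MvPolynomial.aeval_C] at h
  simpa [Algebra.smul_def, mul_comm] using h

end FqAlgebra

theorem prod_X_sub_C_add_comp {R : Type*} [CommRing R] (s : Finset R) (z : R) :
    ∏ a ∈ s, (X - C (z + a)) = (∏ a ∈ s, (X - C a)).comp (X - C z) := by
  rw [Polynomial.prod_comp]
  exact prod_congr rfl fun a _ => by simp only [sub_comp, X_comp, C_comp, map_add]; ring

section CarlitzFactorials

variable {Fq}

@[simp] theorem carlitzD_zero : carlitzD Fq 0 = 1 := by simp [carlitzD]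

@[simp] theorem carlitzL_zero : carlitzL Fq 0 = 1 := by simp [carlitzL]

theorem carlitzD_succ (i : ℕ) :
    carlitzD Fq (i + 1) = (X ^ q ^ (i + 1) - X) * carlitzD Fq i ^ q := by
  have h (j : ℕ) : ((X : Fq[X]) ^ q ^ i - X ^ q ^ j) ^ q = X ^ q ^ (i + 1) - X ^ q ^ (j + 1) := by
    simpa only [pow_one, ← pow_mul, ← pow_succ] using sub_pow_card_pow (Fq := Fq) 1
      ((X : Fq[X]) ^ q ^ i) (X ^ q ^ j)
  rw [carlitzD, prod_range_succ', carlitzD, ← prod_pow]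
  simp only [h, pow_zero, pow_one, mul_comm]

theorem carlitzL_succ (i : ℕ) :
    carlitzL Fq (i + 1) = (X - X ^ q ^ (i + 1)) * carlitzL Fq i := by
  rw [carlitzL, prod_Icc_succ_top (by omega), mul_comm, carlitzL]

theorem carlitzL_add (e i : ℕ) :
    carlitzL Fq (e + i) = carlitzL Fq e * ∏ m ∈ Icc 1 i, (X - X ^ q ^ (e + m)) := by
  induction i with
  | zero => simp
  | succ i ih => rw [← add_assoc, carlitzL_succ, ih, prod_Icc_succ_top (by omega)]; ring

theorem carlitzD_dvd_carlitzD {i j : ℕ} (h : i ≤ j) : carlitzD Fq i ∣ carlitzD Fq j := by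
  induction j, h using Nat.le_induction with
  | base => rfl
  | succ j _ ih =>
    rw [carlitzD_succ]
    exact ih.trans ((dvd_pow_self _ Fintype.card_ne_zero).trans (dvd_mul_left _ _))

variable (Fq) in
/-- `c_{d,j}`, the coefficient of `X ^ q ^ j` in `e_d = ∏_{deg a < d} (X - a)`; the recursion is
`e_{d+1} = e_d ^ q - D_d ^ (q - 1) e_d` (`carlitzPoly_succ`). -/
def carlitzCoeff : ℕ → ℕ → Fq[X]
  | 0, j => if j = 0 then 1 else 0
  | d + 1, j =>
      (if j = 0 then 0 else carlitzCoeff d (j - 1) ^ q) - carlitzD Fq d ^ (q - 1) * carlitzCoeff d j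

theorem carlitzCoeff_eq_zero {d j : ℕ} (h : d < j) : carlitzCoeff Fq d j = 0 := by
  induction d generalizing j with
  | zero => simp [carlitzCoeff, Nat.pos_iff_ne_zero.mp h]
  | succ d ih =>
    rw [carlitzCoeff, if_neg (by omega), ih (by omega), ih (by omega),
      zero_pow Fintype.card_ne_zero]
    simp

theorem carlitzCoeff_mul {d j : ℕ} (h : j ≤ d) :
    carlitzCoeff Fq d j * carlitzD Fq j * carlitzL Fq (d - j) ^ q ^ j = carlitzD Fq d := by
  induction d generalizing j with
  | zero =>
    obtain rfl : j = 0 := by omega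
    simp [carlitzCoeff]
  | succ d ih =>
    -- the two halves of the recursion for `c_{d+1,k}`, each computed from the case `d`
    have frob {k : ℕ} (hk : k ≤ d) : carlitzCoeff Fq d k ^ q * carlitzD Fq (k + 1) *
        carlitzL Fq (d - k) ^ q ^ (k + 1) = carlitzD Fq d ^ q * (X ^ q ^ (k + 1) - X) := by
      rw [carlitzD_succ, pow_succ q k, pow_mul, ← ih hk]
      ring
    have shift {k : ℕ} (hk : k ≤ d) : carlitzD Fq d ^ (q - 1) * carlitzCoeff Fq d k *
        carlitzD Fq k * carlitzL Fq (d + 1 - k) ^ q ^ k =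
          carlitzD Fq d ^ q * (X ^ q ^ k - X ^ q ^ (d + 1)) := by
      have hL : carlitzL Fq (d + 1 - k) ^ q ^ k =
          (X ^ q ^ k - X ^ q ^ (d + 1)) * carlitzL Fq (d - k) ^ q ^ k := by
        rw [show d + 1 - k = d - k + 1 by omega, carlitzL_succ, mul_pow, sub_pow_card_pow,
          ← pow_mul, ← pow_add, show d - k + 1 + k = d + 1 by omega]
      rw [hL, ← pow_sub_one_mul Fintype.card_ne_zero, ← ih hk]
      ring
    rcases j with _ | k
    · have := shift (Nat.zero_le d)
      simp only [carlitzCoeff, if_true, pow_zero, pow_one, carlitzD_zero, mul_one,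
        Nat.sub_zero] at this ⊢
      rw [carlitzD_succ d]
      linear_combination -this
    · have hd : d + 1 - (k + 1) = d - k := by omega
      rw [carlitzCoeff, if_neg (Nat.succ_ne_zero k), Nat.add_sub_cancel, hd]
      rcases Nat.lt_or_ge k d with hk | hk
      · have := shift (k := k + 1) hk
        rw [hd] at this
        rw [carlitzD_succ d]
        linear_combination frob hk.le - this
      · obtain rfl : k = d := by omega
        rw [carlitzCoeff_eq_zero (Nat.lt_succ_self k), mul_zero, sub_zero, frob le_rfl,
          carlitzD_succ k]
        ring

theorem carlitzCoeff_zero_mul (d : ℕ) :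
    carlitzCoeff Fq d 0 * carlitzL Fq d = carlitzD Fq d := by
  simpa using carlitzCoeff_mul (Fq := Fq) (Nat.zero_le d)

end CarlitzFactorials

section CompleteHomogeneous

variable {R S : Type*} [CommRing R] [CommRing S]

/-- `completeHomogeneous x d k` is the complete homogeneous symmetric polynomial of degree `k`
evaluated at `x 0, …, x d`. -/
def completeHomogeneous (x : ℕ → R) : ℕ → ℕ → R
  | 0, k => x 0 ^ k
  | _ + 1, 0 => 1
  | d + 1, k + 1 => completeHomogeneous x d (k + 1) + x (d + 1) * completeHomogeneous x (d + 1) k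

variable (x : ℕ → R)

@[simp] theorem completeHomogeneous_zero_left (k : ℕ) : completeHomogeneous x 0 k = x 0 ^ k := by
  rw [completeHomogeneous]

@[simp] theorem completeHomogeneous_zero_right (d : ℕ) : completeHomogeneous x d 0 = 1 := by
  cases d <;> simp [completeHomogeneous]

theorem completeHomogeneous_succ_succ (d k : ℕ) :
    completeHomogeneous x (d + 1) (k + 1) =
      completeHomogeneous x d (k + 1) + x (d + 1) * completeHomogeneous x (d + 1) k := by
  rw [completeHomogeneous]

theorem map_completeHomogeneous (f : R →+* S) (d k : ℕ) :
    f (completeHomogeneous x d k) = completeHomogeneous (f ∘ x) d k := by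
  induction d generalizing k with
  | zero => simp
  | succ d ihd =>
    induction k with
    | zero => simp
    | succ k ihk => simp [completeHomogeneous_succ_succ, ihd, ihk]

theorem completeHomogeneous_one (d : ℕ) :
    completeHomogeneous x d 1 = ∑ j ∈ range (d + 1), x j := by
  induction d with
  | zero => simp
  | succ d ih => rw [completeHomogeneous_succ_succ, ih, sum_range_succ _ (d + 1)]; simp

theorem completeHomogeneous_succ_succ' (d k : ℕ) :
    completeHomogeneous x (d + 1) (k + 1) =
      completeHomogeneous (x ∘ Nat.succ) d (k + 1) + x 0 * completeHomogeneous x (d + 1) k := by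
  induction k generalizing d with
  | zero =>
    rw [zero_add, completeHomogeneous_one, completeHomogeneous_one, sum_range_succ',
      completeHomogeneous_zero_right, mul_one]
    rfl
  | succ k ihk =>
    induction d with
    | zero =>
      have h := ihk 0
      simp only [completeHomogeneous_succ_succ, completeHomogeneous_zero_left,
        Function.comp_apply] at h ⊢
      linear_combination x 1 * h
    | succ d ihd =>
      have hlast := completeHomogeneous_succ_succ x (d + 1) (k + 1)
      have hlast' := completeHomogeneous_succ_succ x (d + 1) k
      have hshift := completeHomogeneous_succ_succ (x ∘ Nat.succ) d (k + 1)
      simp only [Function.comp_apply] at hshift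
      linear_combination hlast + ihd + x (d + 1 + 1) * ihk (d + 1) - hshift - x 0 * hlast'

theorem completeHomogeneous_shift_sub (d k : ℕ) :
    completeHomogeneous (x ∘ Nat.succ) d (k + 1) - completeHomogeneous x d (k + 1) =
      (x (d + 1) - x 0) * completeHomogeneous x (d + 1) k := by
  linear_combination completeHomogeneous_succ_succ x d k - completeHomogeneous_succ_succ' x d k

end CompleteHomogeneous

section PolysDegreeLT

variable {Fq} [DecidableEq Fq]

variable (Fq) in
def polysDegreeLT : ℕ → Finset Fq[X]
  | 0 => {0}
  | d + 1 => (univ ×ˢ polysDegreeLT d).image fun z => C z.1 * X ^ d + z.2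

theorem mem_polysDegreeLT {d : ℕ} {a : Fq[X]} : a ∈ polysDegreeLT Fq d ↔ a.degree < d := by
  induction d generalizing a with
  | zero => simp [polysDegreeLT]
  | succ d ih =>
    simp only [polysDegreeLT, mem_image, mem_product, mem_univ, true_and, Prod.exists, ih]
    constructor
    · rintro ⟨c, v, hv, rfl⟩
      have hd : (d : WithBot ℕ) < ↑(d + 1) := by exact_mod_cast d.lt_succ_self
      exact (degree_add_le _ _).trans_lt
        (max_lt ((degree_C_mul_X_pow_le d c).trans_lt hd) (hv.trans hd))
    · intro ha
      refine ⟨a.coeff d, a - C (a.coeff d) * X ^ d, ?_, by ring⟩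
      rw [degree_lt_iff_coeff_zero]
      intro m hm
      rw [coeff_sub, coeff_C_mul_X_pow]
      rcases hm.eq_or_lt with rfl | hm
      · simp
      · rw [if_neg hm.ne', sub_zero]
        exact coeff_eq_zero_of_degree_lt (ha.trans_le (by exact_mod_cast hm))

theorem polysDegreeLT_succ_injOn (d : ℕ) :
    Set.InjOn (fun z : Fq × Fq[X] => C z.1 * X ^ d + z.2)
      (univ ×ˢ polysDegreeLT Fq d : Finset (Fq × Fq[X])) := by
  rintro ⟨c, v⟩ hv ⟨c', v'⟩ hv' h
  simp only [coe_product, coe_univ, Set.mem_prod, Set.mem_univ, true_and, mem_coe,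
    mem_polysDegreeLT] at hv hv' h
  have hc : c = c' := by
    simpa [coeff_eq_zero_of_degree_lt hv, coeff_eq_zero_of_degree_lt hv'] using
      congrArg (coeff · d) h
  subst hc
  simpa using h

variable (Fq) in
def monicsOfDegree (d : ℕ) : Finset Fq[X] := (polysDegreeLT Fq d).image (X ^ d + ·)

theorem mem_monicsOfDegree {d : ℕ} {b : Fq[X]} :
    b ∈ monicsOfDegree Fq d ↔ b.Monic ∧ b.natDegree = d := by
  simp only [monicsOfDegree, mem_image, mem_polysDegreeLT]
  constructor
  · rintro ⟨a, ha, rfl⟩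
    rw [← degree_X_pow (R := Fq) d] at ha
    exact ⟨(monic_X_pow d).add_of_left ha, by
      rw [natDegree_add_eq_left_of_degree_lt ha, natDegree_X_pow]⟩
  · rintro ⟨hb, rfl⟩
    refine ⟨b - X ^ b.natDegree, ?_, by ring⟩
    have hdeg := degree_eq_natDegree hb.ne_zero
    rw [← hdeg]
    exact degree_sub_lt_left (by rw [degree_X_pow, hdeg]) hb.ne_zero
      (by rw [hb.leadingCoeff, leadingCoeff_X_pow])

theorem prod_monicsOfDegree {M : Type*} [CommMonoid M] (d : ℕ) (f : Fq[X] → M) :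
    ∏ b ∈ monicsOfDegree Fq d, f b = ∏ a ∈ polysDegreeLT Fq d, f (X ^ d + a) :=
  prod_image fun _ _ _ _ h => add_left_cancel h

end PolysDegreeLT

section CarlitzPoly

variable {Fq}

variable (Fq) in
/-- The Carlitz polynomial `e_d = ∏_{deg a < d} (X - a)`, defined through its `𝔽_q`-linear
expansion (see `carlitzPoly_eq_prod`). -/
def carlitzPoly (d : ℕ) : Fq[X][X] := ∑ j ∈ range (d + 1), C (carlitzCoeff Fq d j) * X ^ q ^ j

theorem carlitzPoly_zero : carlitzPoly Fq 0 = X := by simp [carlitzPoly, carlitzCoeff]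

theorem carlitzPoly_succ (d : ℕ) :
    carlitzPoly Fq (d + 1) =
      carlitzPoly Fq d ^ q - C (carlitzD Fq d ^ (q - 1)) * carlitzPoly Fq d := by
  have hpow : carlitzPoly Fq d ^ q =
      ∑ j ∈ range (d + 1), C (carlitzCoeff Fq d j ^ q) * X ^ q ^ (j + 1) := by
    rw [carlitzPoly, sum_pow_card]
    refine sum_congr rfl fun j _ => ?_
    rw [mul_pow, ← C_pow, ← pow_mul, pow_succ]
  rw [hpow, carlitzPoly, carlitzPoly, mul_sum]
  simp only [carlitzCoeff.eq_2, map_sub, sub_mul, sum_sub_distrib]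
  rw [sum_range_succ', sum_range_succ _ (d + 1), carlitzCoeff_eq_zero (Nat.lt_succ_self d)]
  simp [mul_assoc]

theorem carlitzPoly_eval_X_pow (d k : ℕ) :
    (carlitzPoly Fq d).eval (X ^ (d + k)) =
      carlitzD Fq d * completeHomogeneous (fun j => X ^ q ^ j) d k := by
  induction d generalizing k with
  | zero => simp [carlitzPoly_zero]
  | succ d ih =>
    have hfrob : completeHomogeneous (fun j => (X : Fq[X]) ^ q ^ j) d (k + 1) ^ q =
        completeHomogeneous ((fun j => (X : Fq[X]) ^ q ^ j) ∘ Nat.succ) d (k + 1) := by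
      rw [← FiniteField.frobeniusAlgHom_apply Fq Fq[X], ← AlgHom.coe_toRingHom,
        map_completeHomogeneous]
      congr 1
      funext j
      simp [← pow_mul, pow_succ]
    rw [carlitzPoly_succ, eval_sub, eval_pow, eval_mul, eval_C,
      show d + 1 + k = d + (k + 1) by ring, ih, carlitzD_succ]
    linear_combination carlitzD Fq d ^ q *
        completeHomogeneous_shift_sub (fun j => (X : Fq[X]) ^ q ^ j) d k +
      carlitzD Fq d ^ q * hfrob -
      completeHomogeneous (fun j => (X : Fq[X]) ^ q ^ j) d (k + 1) *
        pow_sub_one_mul (Fintype.card_ne_zero (α := Fq)) (carlitzD Fq d)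

theorem carlitzPoly_eval_X_pow_self (d : ℕ) :
    (carlitzPoly Fq d).eval (X ^ d) = carlitzD Fq d := by
  simpa using carlitzPoly_eval_X_pow (Fq := Fq) d 0

theorem carlitzPoly_comp_X_sub_C (d : ℕ) (z : Fq[X]) :
    (carlitzPoly Fq d).comp (X - C z) = carlitzPoly Fq d - C ((carlitzPoly Fq d).eval z) := by
  simp only [carlitzPoly, Polynomial.sum_comp, mul_comp, C_comp, X_pow_comp, sub_pow_card_pow,
    ← C_pow, eval_finsetSum, eval_mul, eval_C, eval_pow, eval_X, map_sum, mul_sub,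
    sum_sub_distrib, map_mul]

theorem carlitzPoly_eval_C_mul (d : ℕ) (c : Fq) (z : Fq[X]) :
    (carlitzPoly Fq d).eval (C c * z) = C c * (carlitzPoly Fq d).eval z := by
  simp only [carlitzPoly, eval_finsetSum, eval_mul, eval_C, eval_pow, eval_X, mul_sum, mul_pow,
    ← C_pow, FiniteField.pow_card_pow]
  exact sum_congr rfl fun _ _ => by ring

theorem derivative_carlitzPoly (d : ℕ) :
    derivative (carlitzPoly Fq d) = C (carlitzCoeff Fq d 0) := by
  rw [carlitzPoly, derivative_sum, sum_range_succ']
  simp [derivative_X_pow, natCast_card_eq_zero (Fq := Fq) (R := Fq[X])]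

variable [DecidableEq Fq]

theorem carlitzPoly_eq_prod (d : ℕ) :
    carlitzPoly Fq d = ∏ a ∈ polysDegreeLT Fq d, (X - C a) := by
  induction d with
  | zero => simp [carlitzPoly_zero, polysDegreeLT]
  | succ d ih =>
    have hfactor (c : Fq) : ∏ a ∈ polysDegreeLT Fq d, (X - C (C c * X ^ d + a)) =
        carlitzPoly Fq d - c • C (carlitzD Fq d) := by
      rw [prod_X_sub_C_add_comp, ← ih, carlitzPoly_comp_X_sub_C, carlitzPoly_eval_C_mul,
        carlitzPoly_eval_X_pow_self, smul_C, smul_eq_C_mul]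
    rw [polysDegreeLT, prod_image (polysDegreeLT_succ_injOn d), prod_product,
      prod_congr rfl fun c _ => hfactor c, prod_sub_smul, carlitzPoly_succ, map_pow]

theorem prod_X_sub_C_monicsOfDegree (d : ℕ) :
    ∏ b ∈ monicsOfDegree Fq d, (X - C b) = carlitzPoly Fq d - C (carlitzD Fq d) := by
  rw [prod_monicsOfDegree, prod_X_sub_C_add_comp, ← carlitzPoly_eq_prod, carlitzPoly_comp_X_sub_C,
    carlitzPoly_eval_X_pow_self]

theorem prod_neg_monicsOfDegree (d : ℕ) :
    ∏ b ∈ monicsOfDegree Fq d, (-b) = -carlitzD Fq d := by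
  have h := congrArg (eval 0) (prod_X_sub_C_monicsOfDegree (Fq := Fq) d)
  simpa [eval_prod, carlitzPoly, eval_finsetSum, zero_pow (pow_ne_zero _ Fintype.card_ne_zero)]
    using h

end CarlitzPoly

section PowerSums

variable {K : Type*} [Field K]

/-- The logarithmic derivative `g' / g = ∑_i 1 / (X - β i)` of `g = ∏_i (X - β i)`, expanded
at `X = 0`. -/
theorem coe_prod_X_sub_C_mul_mk_sum_inv_pow {ι : Type*} (s : Finset ι) (β : ι → K)
    (hβ : ∀ i ∈ s, β i ≠ 0) :
    ((∏ i ∈ s, (X - C (β i)) : K[X]) : PowerSeries K) *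
        PowerSeries.mk (fun k => ∑ i ∈ s, (β i)⁻¹ ^ (k + 1)) =
      -((derivative (∏ i ∈ s, (X - C (β i))) : K[X]) : PowerSeries K) := by
  classical
  have geom : ∀ i ∈ s, ((X - C (β i) : K[X]) : PowerSeries K) *
      PowerSeries.mk (fun k => (β i)⁻¹ ^ (k + 1)) = -1 := by
    intro i hi
    ext (_ | n)
    · simp [hβ i hi]
    · rw [Polynomial.coe_sub, Polynomial.coe_X, Polynomial.coe_C, sub_mul, map_sub,
        PowerSeries.coeff_succ_X_mul, PowerSeries.coeff_C_mul, PowerSeries.coeff_mk,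
        PowerSeries.coeff_mk, pow_succ _ (n + 1), mul_left_comm,
        mul_inv_cancel₀ (hβ i hi), mul_one, sub_self, map_neg, PowerSeries.coeff_one,
        if_neg n.succ_ne_zero, neg_zero]
  have hmk : PowerSeries.mk (fun k => ∑ i ∈ s, (β i)⁻¹ ^ (k + 1)) =
      ∑ i ∈ s, PowerSeries.mk (fun k => (β i)⁻¹ ^ (k + 1)) := by
    ext; simp [map_sum]
  rw [hmk, mul_sum, derivative_prod_finset]
  simp only [← Polynomial.coeToPowerSeries.ringHom_apply, map_sum, map_mul]
  rw [← sum_neg_distrib]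
  refine sum_congr rfl fun i hi => ?_
  have h := geom i hi
  rw [← coeToPowerSeries.ringHom_apply] at h
  rw [← mul_prod_erase s _ hi, map_mul, derivative_sub, derivative_X, derivative_C, sub_zero,
    map_one, mul_one]
  linear_combination coeToPowerSeries.ringHom (∏ x ∈ s.erase i, (X - C (β x))) * h

variable {Fq} [DecidableEq Fq] (π : Fq[X] →+* K)

/-- The power sum `S_d(k) = ∑_{b monic, deg b = d} b ^ (-k)`, computed in `K`. -/
def invPowerSum (d k : ℕ) : K := ∑ b ∈ monicsOfDegree Fq d, (π b)⁻¹ ^ k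

variable {π}

theorem map_ne_zero_of_mem_monicsOfDegree {d : ℕ} (hD : π (carlitzD Fq d) ≠ 0) {b : Fq[X]}
    (hb : b ∈ monicsOfDegree Fq d) : π b ≠ 0 := by
  have h : ∏ b ∈ monicsOfDegree Fq d, π (-b) ≠ 0 := by
    rwa [← map_prod, prod_neg_monicsOfDegree, map_neg, neg_ne_zero]
  simpa using prod_ne_zero_iff.mp h b hb

theorem carlitzD_mul_invPowerSum {d : ℕ} (hD : π (carlitzD Fq d) ≠ 0) (n : ℕ) :
    π (carlitzD Fq d) * invPowerSum π d (n + 1) =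
      (if n = 0 then π (carlitzCoeff Fq d 0) else 0) +
        ∑ j ∈ range (d + 1), if q ^ j ≤ n then
          π (carlitzCoeff Fq d j) * invPowerSum π d (n - q ^ j + 1) else 0 := by
  -- coefficient `n` of `(e_d - D_d) * ∑_k S_d (k + 1) X ^ k = -e_d' = -c_{d,0}`
  have key := coe_prod_X_sub_C_mul_mk_sum_inv_pow (monicsOfDegree Fq d) (fun b => π b)
    fun b hb => map_ne_zero_of_mem_monicsOfDegree hD hb
  have hg : ∏ b ∈ monicsOfDegree Fq d, (X - C (π b)) =
      (carlitzPoly Fq d - C (carlitzD Fq d)).map π := by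
    rw [← prod_X_sub_C_monicsOfDegree, Polynomial.map_prod]
    simp
  rw [hg, derivative_map, derivative_sub, derivative_C, sub_zero, derivative_carlitzPoly,
    Polynomial.map_C] at key
  have := congrArg (PowerSeries.coeff n) key
  simp only [carlitzPoly, Polynomial.map_sub, Polynomial.map_sum, Polynomial.map_mul,
    Polynomial.map_C, Polynomial.map_pow, Polynomial.map_X, ← coeToPowerSeries.ringHom_apply,
    map_sub, map_sum, map_mul, map_pow, map_neg] at this
  simp only [coeToPowerSeries.ringHom_apply, coe_C, coe_X, sub_mul, sum_mul, mul_assoc, map_sub,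
    map_sum, PowerSeries.coeff_C_mul, PowerSeries.coeff_X_pow_mul', PowerSeries.coeff_mk,
    PowerSeries.coeff_C, mul_ite, mul_zero] at this
  unfold invPowerSum
  linear_combination -this

end PowerSums

section ReducesTo

variable {R K : Type*} [CommRing R] [Field K] {ψ : R →+* K}

theorem algebraMap_ne_zero_of_map_ne_zero {b : R} (hb : ψ b ≠ 0) :
    algebraMap R (FractionRing R) b ≠ 0 :=
  (map_ne_zero_iff _ (IsFractionRing.injective R _)).mpr fun h => hb (by rw [h, map_zero])

variable [IsDomain R]

variable (ψ) in
/-- `x` has a representative `a / b` with `ψ b ≠ 0` and `y = ψ a / ψ b`. Such a `y` is unique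
(`ReducesTo.unique`), so this is the partial reduction map `Frac R ⇀ K` along `ψ`. -/
def ReducesTo (x : FractionRing R) (y : K) : Prop :=
  ∃ a b : R, ψ b ≠ 0 ∧
    x = algebraMap R (FractionRing R) a / algebraMap R (FractionRing R) b ∧ y = ψ a / ψ b

theorem reducesTo_div {a b : R} (hb : ψ b ≠ 0) :
    ReducesTo ψ (algebraMap R (FractionRing R) a / algebraMap R (FractionRing R) b)
      (ψ a / ψ b) :=
  ⟨a, b, hb, rfl, rfl⟩

theorem reducesTo_zero : ReducesTo ψ 0 0 :=
  ⟨0, 1, by simp, by simp, by simp⟩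

theorem reducesTo_one : ReducesTo ψ 1 1 :=
  ⟨1, 1, by simp, by simp, by simp⟩

theorem ReducesTo.add {x x' : FractionRing R} {y y' : K} (h : ReducesTo ψ x y)
    (h' : ReducesTo ψ x' y') : ReducesTo ψ (x + x') (y + y') := by
  obtain ⟨a, b, hb, rfl, rfl⟩ := h
  obtain ⟨a', b', hb', rfl, rfl⟩ := h'
  refine ⟨a * b' + b * a', b * b', by simp [hb, hb'], ?_, ?_⟩
  · rw [div_add_div _ _ (algebraMap_ne_zero_of_map_ne_zero hb)
      (algebraMap_ne_zero_of_map_ne_zero hb')]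
    simp
  · rw [div_add_div _ _ hb hb']
    simp

theorem ReducesTo.mul {x x' : FractionRing R} {y y' : K} (h : ReducesTo ψ x y)
    (h' : ReducesTo ψ x' y') : ReducesTo ψ (x * x') (y * y') := by
  obtain ⟨a, b, hb, rfl, rfl⟩ := h
  obtain ⟨a', b', hb', rfl, rfl⟩ := h'
  exact ⟨a * a', b * b', by simp [hb, hb'], by simp [div_mul_div_comm],
    by simp [div_mul_div_comm]⟩

theorem ReducesTo.sum {ι : Type*} (s : Finset ι) {x : ι → FractionRing R} {y : ι → K}
    (h : ∀ i ∈ s, ReducesTo ψ (x i) (y i)) :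
    ReducesTo ψ (∑ i ∈ s, x i) (∑ i ∈ s, y i) := by
  classical
  induction s using Finset.induction_on with
  | empty => simpa using reducesTo_zero
  | insert i s hi ih =>
    rw [sum_insert hi, sum_insert hi]
    exact (h i (mem_insert_self i s)).add (ih fun j hj => h j (mem_insert_of_mem hj))

theorem ReducesTo.unique {x : FractionRing R} {y y' : K} (h : ReducesTo ψ x y)
    (h' : ReducesTo ψ x y') : y = y' := by
  obtain ⟨a, b, hb, rfl, rfl⟩ := h
  obtain ⟨a', b', hb', hx, rfl⟩ := h'
  rw [div_eq_div_iff (algebraMap_ne_zero_of_map_ne_zero hb)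
    (algebraMap_ne_zero_of_map_ne_zero hb'), ← map_mul, ← map_mul] at hx
  rw [div_eq_div_iff hb hb', ← map_mul, ← map_mul, IsFractionRing.injective R _ hx]

end ReducesTo

section TwistEvalHom

variable {Fq}

variable (Fq) in
/-- The substitution `θ ↦ θ ^ q ^ d`, `t ↦ θ`, which sends `H` to `twistEval Fq H d`. -/
def twistEvalHom (d : ℕ) : ATRing Fq →+* Fq[X] := MvPolynomial.eval₂Hom C ![X ^ q ^ d, X]

theorem twistEvalHom_comp_C (d : ℕ) : (twistEvalHom Fq d).comp MvPolynomial.C = C := by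
  ext; simp [twistEvalHom]

theorem twistEvalHom_toSt (d : ℕ) (a : Fq[X]) : twistEvalHom Fq d (toSt Fq a) = a := by
  rw [toSt, coe_eval₂RingHom, hom_eval₂, twistEvalHom_comp_C]
  simp [twistEvalHom, tS]

theorem twistEvalHom_comp_toSθ (d : ℕ) :
    (twistEvalHom Fq d).comp (toSθ Fq) = (FiniteField.frobeniusAlgHom Fq Fq[X] ^ d).toRingHom := by
  refine ringHom_ext (fun c => ?_) ?_
  · simp [toSθ, twistEvalHom, frobeniusAlgHom_pow_apply, ← C_pow, FiniteField.pow_card_pow]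
  · simp [toSθ, twistEvalHom, frobeniusAlgHom_pow_apply, θS]

theorem twistEvalHom_toS₂ (d : ℕ) (H : Fq[X][X]) :
    twistEvalHom Fq d (toS₂ Fq H) = twistEval Fq H d := by
  rw [toS₂, coe_eval₂RingHom, hom_eval₂, twistEvalHom_comp_toSθ, eval₂_eq_sum_range,
    twistEval]
  simp [twistEvalHom, tS, frobeniusAlgHom_pow_apply]

theorem twistEvalHom_ATG (d i : ℕ) :
    twistEvalHom Fq d (ATG Fq i) = ∏ m ∈ Icc 1 i, (X ^ q ^ i - X ^ q ^ (d + m)) := by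
  simp [ATG, twistEvalHom, tS, θS, ← pow_mul, ← pow_add]

theorem twistEvalHom_ATG_of_lt {d i : ℕ} (h : d < i) : twistEvalHom Fq d (ATG Fq i) = 0 := by
  rw [twistEvalHom_ATG]
  exact prod_eq_zero (i := i - d) (mem_Icc.mpr ⟨by omega, by omega⟩)
    (by rw [Nat.add_sub_cancel' h.le, sub_self])

theorem twistEvalHom_ATG_mul (e i : ℕ) :
    twistEvalHom Fq (e + i) (ATG Fq i) * carlitzL Fq e ^ q ^ i = carlitzL Fq (e + i) ^ q ^ i := by
  rw [twistEvalHom_ATG, carlitzL_add, mul_pow, mul_comm, ← prod_pow]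
  congr 1
  refine prod_congr rfl fun m _ => ?_
  rw [sub_pow_card_pow, ← pow_mul, ← pow_add, add_right_comm]

end TwistEvalHom

theorem sum_antidiagonal_sum_ite_pow_eq {M : Type*} [CommSemiring M] {b : ℕ} (hb : 1 < b)
    (a g : ℕ → M) (n : ℕ) :
    ∑ p ∈ antidiagonal n, (∑ i ∈ range (p.1 + 1), if b ^ i = p.1 then a i else 0) * g p.2 =
      ∑ i ∈ range (n + 1), if b ^ i ≤ n then a i * g (n - b ^ i) else 0 := by
  rw [Nat.sum_antidiagonal_eq_sum_range_succ_mk]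
  have hext (u : ℕ) (hu : u ∈ range (n + 1)) :
      (∑ i ∈ range (u + 1), if b ^ i = u then a i else 0) * g (n - u) =
        ∑ i ∈ range (n + 1), if b ^ i = u then a i * g (n - u) else 0 := by
    rw [sum_mul]
    refine sum_subset (range_subset_range.mpr (by simpa using hu)) (fun i _ hi => ?_) |>.trans
      (sum_congr rfl fun i _ => by split_ifs <;> simp)
    have := Nat.lt_pow_self (n := i) hb
    simp only [mem_range, not_lt] at hi
    rw [if_neg (by omega), zero_mul]
  rw [sum_congr rfl hext, sum_comm]
  refine sum_congr rfl fun i _ => ?_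
  rw [sum_ite_eq]
  simp only [mem_range, Nat.lt_succ_iff]

section ATRecursion

variable {Fq}

theorem IsATFamily.div_eq {H : ℕ → Fq[X][X]} (hH : IsATFamily Fq H) (n : ℕ) :
    ιF Fq (toS₂ Fq (H n)) / ιF Fq (toSt Fq (carlitzΓ Fq (n + 1))) =
      (if n = 0 then 1 else 0) + ∑ i ∈ range (n + 1), if q ^ i ≤ n then
        ιF Fq (ATG Fq i) / ιF Fq (toSt Fq (carlitzD Fq i)) *
          (ιF Fq (toS₂ Fq (H (n - q ^ i))) / ιF Fq (toSt Fq (carlitzΓ Fq (n - q ^ i + 1))))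
        else 0 := by
  have h := congrArg (PowerSeries.coeff n) hH
  rw [sub_mul, one_mul, map_sub, PowerSeries.coeff_mul, PowerSeries.coeff_one] at h
  simp only [PowerSeries.coeff_mk] at h
  rw [sum_antidiagonal_sum_ite_pow_eq (Fintype.one_lt_card (α := Fq))
    (fun i => ιF Fq (ATG Fq i) / ιF Fq (toSt Fq (carlitzD Fq i)))
    (fun m => ιF Fq (toS₂ Fq (H m)) / ιF Fq (toSt Fq (carlitzΓ Fq (m + 1))))] at h
  linear_combination h

variable {K : Type*} [Field K] {π : Fq[X] →+* K}

theorem map_carlitzΓ_succ_ne_zero {n : ℕ}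
    (hD : ∀ i, q ^ i ≤ n → π (carlitzD Fq i) ≠ 0) :
    π (carlitzΓ Fq (n + 1)) ≠ 0 := by
  rw [carlitzΓ, map_prod, Nat.add_sub_cancel]
  refine prod_ne_zero_iff.mpr fun i _ => ?_
  rw [map_pow]
  by_cases h : q ^ i ≤ n
  · exact pow_ne_zero _ (hD i h)
  · rw [Nat.div_eq_of_lt (not_le.mp h), Nat.zero_mod, pow_zero]
    exact one_ne_zero

theorem IsATFamily.map_twistEval_div {H : ℕ → Fq[X][X]} (hH : IsATFamily Fq H) (d : ℕ)
    {n : ℕ} (hD : ∀ i, q ^ i ≤ n → π (carlitzD Fq i) ≠ 0) :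
    π (twistEval Fq (H n) d) / π (carlitzΓ Fq (n + 1)) =
      (if n = 0 then 1 else 0) + ∑ i ∈ range (n + 1), if q ^ i ≤ n then
        π (twistEvalHom Fq d (ATG Fq i)) / π (carlitzD Fq i) *
          (π (twistEval Fq (H (n - q ^ i)) d) / π (carlitzΓ Fq (n - q ^ i + 1)))
        else 0 := by
  -- reduce the identity `hH.div_eq n` in `Frac 𝔽_q[θ, t]` along `ψ`
  set ψ := π.comp (twistEvalHom Fq d)
  have hΓ {m : ℕ} (hm : m ≤ n) : ReducesTo ψ
      (ιF Fq (toS₂ Fq (H m)) / ιF Fq (toSt Fq (carlitzΓ Fq (m + 1))))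
      (π (twistEval Fq (H m) d) / π (carlitzΓ Fq (m + 1))) := by
    have h := reducesTo_div (ψ := ψ) (a := toS₂ Fq (H m)) (b := toSt Fq (carlitzΓ Fq (m + 1)))
      (by simpa [ψ, twistEvalHom_toSt] using
        map_carlitzΓ_succ_ne_zero fun i hi => hD i (hi.trans hm))
    simpa [ψ, ιF, twistEvalHom_toS₂, twistEvalHom_toSt] using h
  refine (hΓ le_rfl).unique ?_
  rw [hH.div_eq n]
  refine ReducesTo.add ?_ (ReducesTo.sum _ fun i _ => ?_)
  · split_ifs
    exacts [reducesTo_one, reducesTo_zero]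
  · split_ifs with hi
    · refine ReducesTo.mul ?_ (hΓ (Nat.sub_le _ _))
      simpa [ψ, ιF, twistEvalHom_toSt] using reducesTo_div (ψ := ψ) (a := ATG Fq i)
        (b := toSt Fq (carlitzD Fq i)) (by simpa [ψ, twistEvalHom_toSt] using hD i hi)
    · exact reducesTo_zero

end ATRecursion

theorem sum_range_ite_pow_le_eq {M : Type*} [AddCommMonoid M] {b : ℕ} (hb : 1 < b) {n d : ℕ}
    {f : ℕ → M} (hf : ∀ i, d < i → f i = 0) :
    ∑ i ∈ range (n + 1), (if b ^ i ≤ n then f i else 0) =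
      ∑ i ∈ range (d + 1), (if b ^ i ≤ n then f i else 0) := by
  have hbig {m : ℕ} (h : m ≤ n + d + 1) (hm : ∀ i, m ≤ i → i ≤ n → f i = 0) :
      ∑ i ∈ range m, (if b ^ i ≤ n then f i else 0) =
        ∑ i ∈ range (n + d + 1), (if b ^ i ≤ n then f i else 0) := by
    refine sum_subset (range_subset_range.mpr h) fun i hi him => ?_
    simp only [mem_range, not_lt] at hi him
    split_ifs with hbi
    · exact hm i him ((Nat.lt_pow_self hb).le.trans hbi)
    · rfl
  rw [hbig (by omega) (fun i hi hin => by omega), hbig (by omega) (fun i hi _ => hf i hi)]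

section Comparison

variable {Fq} {K : Type*} [Field K] {π : Fq[X] →+* K}

theorem map_twistEvalHom_ATG_div {d : ℕ} (hD : π (carlitzD Fq d) ≠ 0) (i : ℕ) :
    π (twistEvalHom Fq d (ATG Fq i)) / π (carlitzD Fq i) =
      π (carlitzCoeff Fq d i) * π (carlitzL Fq d) ^ q ^ i / π (carlitzD Fq d) := by
  rcases lt_or_ge d i with h | h
  · simp [twistEvalHom_ATG_of_lt h, carlitzCoeff_eq_zero h]
  obtain ⟨e, rfl⟩ : ∃ e, d = e + i := ⟨d - i, by omega⟩
  have hc := congrArg π (carlitzCoeff_mul (Fq := Fq) (j := i) (d := e + i) (by omega))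
  have hG := congrArg π (twistEvalHom_ATG_mul (Fq := Fq) e i)
  rw [Nat.add_sub_cancel] at hc
  simp only [map_mul, map_pow] at hc hG
  have hne :
      π (carlitzCoeff Fq (e + i) i) * π (carlitzD Fq i) * π (carlitzL Fq e) ^ q ^ i ≠ 0 := by
    rwa [hc]
  simp only [mul_ne_zero_iff] at hne
  rw [div_eq_div_iff hne.1.2 hD, ← hc, ← hG]
  ring

theorem map_carlitzL_ne_zero {d : ℕ} (hD : π (carlitzD Fq d) ≠ 0) :
    π (carlitzL Fq d) ≠ 0 := by
  rw [← carlitzCoeff_zero_mul, map_mul] at hD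
  exact right_ne_zero_of_mul hD

variable [DecidableEq Fq]

theorem carlitzL_pow_mul_invPowerSum {d : ℕ} (hD : π (carlitzD Fq d) ≠ 0) (n : ℕ) :
    π (carlitzL Fq d) ^ (n + 1) * invPowerSum π d (n + 1) =
      (if n = 0 then 1 else 0) + ∑ j ∈ range (d + 1), if q ^ j ≤ n then
        π (carlitzCoeff Fq d j) * π (carlitzL Fq d) ^ q ^ j / π (carlitzD Fq d) *
          (π (carlitzL Fq d) ^ (n - q ^ j + 1) * invPowerSum π d (n - q ^ j + 1)) else 0 := by
  have hc0 := congrArg π (carlitzCoeff_zero_mul (Fq := Fq) d)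
  rw [map_mul] at hc0
  apply mul_left_cancel₀ hD
  rw [mul_left_comm, carlitzD_mul_invPowerSum hD n, mul_add, mul_add, mul_sum, mul_sum]
  congr 1
  · split_ifs with hn
    · rw [hn, ← hc0]; ring
    · simp
  · refine sum_congr rfl fun j _ => ?_
    split_ifs with hj
    · rw [show n + 1 = q ^ j + (n - q ^ j + 1) by omega, pow_add]
      field_simp
    · simp

theorem IsATFamily.twistEval_div_eq {H : ℕ → Fq[X][X]} (hH : IsATFamily Fq H) {d : ℕ}
    (hD : π (carlitzD Fq d) ≠ 0) {n : ℕ}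
    (hn : ∀ i, q ^ i ≤ n → π (carlitzD Fq i) ≠ 0) :
    π (twistEval Fq (H n) d) / π (carlitzΓ Fq (n + 1)) =
      π (carlitzL Fq d) ^ (n + 1) * invPowerSum π d (n + 1) := by
  induction n using Nat.strong_induction_on with
  | _ n ih =>
  rw [hH.map_twistEval_div d hn, carlitzL_pow_mul_invPowerSum hD n,
    sum_range_ite_pow_le_eq (d := d) Fintype.one_lt_card fun i hi => by
      simp [twistEvalHom_ATG_of_lt hi]]
  congr 1
  refine sum_congr rfl fun i _ => ?_
  split_ifs with hi
  · have hpos := Nat.one_le_pow i q Fintype.card_pos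
    rw [map_twistEvalHom_ATG_div hD,
      ih (n - q ^ i) (by omega) fun k hk => hn k (hk.trans (Nat.sub_le _ _))]
  · rfl

theorem IsATFamily.invPowerSum_eq {H : ℕ → Fq[X][X]} (hH : IsATFamily Fq H) {d : ℕ}
    (hD : π (carlitzD Fq d) ≠ 0) {s : ℕ} (hs : 0 < s)
    (hΓ : ∀ i, q ^ i ≤ s - 1 → π (carlitzD Fq i) ≠ 0) :
    invPowerSum π d s =
      π (twistEval Fq (H (s - 1)) d) * (π (carlitzΓ Fq s))⁻¹ *
        (π (carlitzL Fq d))⁻¹ ^ s := by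
  have h := hH.twistEval_div_eq hD hΓ
  rw [Nat.sub_add_cancel hs, div_eq_mul_inv] at h
  rw [h, inv_pow, mul_comm, ← mul_assoc,
    inv_mul_cancel₀ (pow_ne_zero _ (map_carlitzL_ne_zero hD)), one_mul]

end Comparison

section ModP

variable {Fq} {P : Fq[X]}

theorem not_dvd_carlitzD (hP : Prime P) {d : ℕ} (hd : d < P.natDegree) :
    ¬ P ∣ carlitzD Fq d := by
  classical
  rw [← dvd_neg, ← prod_neg_monicsOfDegree, hP.dvd_finsetProd_iff]
  rintro ⟨b, hb, hdvd⟩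
  obtain ⟨hmon, rfl⟩ := mem_monicsOfDegree.mp hb
  exact hd.not_ge (natDegree_le_of_dvd (dvd_neg.mp hdvd) hmon.ne_zero)

theorem not_dvd_carlitzD_of_not_dvd_carlitzΓ {s i : ℕ} (hΓ : ¬ P ∣ carlitzΓ Fq s)
    (hi : q ^ i ≤ s - 1) : ¬ P ∣ carlitzD Fq i := by
  have hq : 1 < q := Fintype.one_lt_card
  have hm : s - 1 ≠ 0 := by have := Nat.one_le_pow i q (by omega); omega
  set k := Nat.log q (s - 1)
  have hk : q ^ k ≤ s - 1 := Nat.pow_log_le_self q hm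
  have hdigit : (s - 1) / q ^ k % q ≠ 0 := by
    rw [Nat.mod_eq_of_lt (Nat.div_lt_of_lt_mul (by
      simpa [pow_succ, mul_comm] using Nat.lt_pow_succ_log_self hq (s - 1)))]
    exact (Nat.div_pos hk (by positivity)).ne'
  have hks : k ∈ range s := mem_range.mpr (by have := Nat.lt_pow_self (n := k) hq; omega)
  intro hP
  exact hΓ ((hP.trans (carlitzD_dvd_carlitzD (Nat.le_log_of_pow_le hq hi))).trans
    ((dvd_pow_self _ hdigit).trans (dvd_prod_of_mem _ hks)))

variable [DecidableEq Fq]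

theorem IsATFamily.sum_monicsOfDegree_inverse_pow {H : ℕ → Fq[X][X]} (hH : IsATFamily Fq H)
    (hP : Irreducible P) {d s : ℕ} (hd : d < P.natDegree) (hs : 0 < s)
    (hΓ : ¬ P ∣ carlitzΓ Fq s) :
    ∑ b ∈ monicsOfDegree Fq d, Ring.inverse (Ideal.Quotient.mk (Ideal.span {P}) b) ^ s =
      Ideal.Quotient.mk (Ideal.span {P}) (twistEval Fq (H (s - 1)) d) *
        Ring.inverse (Ideal.Quotient.mk (Ideal.span {P}) (carlitzΓ Fq s)) *
        Ring.inverse (Ideal.Quotient.mk (Ideal.span {P}) (carlitzL Fq d)) ^ s := by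
  have : (Ideal.span {P}).IsMaximal := PrincipalIdealRing.isMaximal_of_irreducible hP
  let _ : Field (Fq[X] ⧸ Ideal.span {P}) := Ideal.Quotient.field _
  have hπ (a : Fq[X]) : Ideal.Quotient.mk (Ideal.span {P}) a ≠ 0 ↔ ¬ P ∣ a :=
    (Ideal.Quotient.eq_zero_iff_dvd P a).not
  simp only [Ring.inverse_eq_inv]
  exact hH.invPowerSum_eq ((hπ _).mpr (not_dvd_carlitzD hP.prime hd)) hs
    fun i hi => (hπ _).mpr (not_dvd_carlitzD_of_not_dvd_carlitzΓ hΓ hi)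

end ModP

section MultipleSums

def strictAntiIndices (r N : ℕ) : Finset (Fin r → ℕ) :=
  (Fintype.piFinset fun _ => range N).filter fun ι => ∀ l l', l < l' → ι l' < ι l

theorem mem_strictAntiIndices {r N : ℕ} {ι : Fin r → ℕ} :
    ι ∈ strictAntiIndices r N ↔ (∀ l l', l < l' → ι l' < ι l) ∧ ∀ l, ι l < N := by
  simp [strictAntiIndices, and_comm]

theorem coe_strictAntiIndices (r N : ℕ) :
    (strictAntiIndices r N : Set (Fin r → ℕ)) =
      {ι | (∀ l l', l < l' → ι l' < ι l) ∧ ∀ l, ι l < N} := by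
  ext; simp [mem_strictAntiIndices]

theorem sum_pow_mul_sum_prod_eq {M : Type*} [CommSemiring M] {r : ℕ} (x : M) (m : Fin r → ℕ)
    (T : Finset (Fin r → ℕ)) (c : Fin r → ℕ → ℕ → M) (w : Fin r → ℕ → M) :
    ∑ j ∈ Fintype.piFinset (fun l => range (m l + 1)),
        x ^ (∑ l, j l) * ∑ ι ∈ T, ∏ l, c l (j l) (ι l) * w l (ι l) =
      ∑ ι ∈ T, ∏ l, (∑ k ∈ range (m l + 1), c l k (ι l) * x ^ k) * w l (ι l) := by
  simp_rw [mul_sum]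
  rw [sum_comm]
  refine sum_congr rfl fun ι _ => ?_
  simp_rw [sum_mul, prod_univ_sum]
  refine sum_congr rfl fun j _ => ?_
  rw [← prod_pow_eq_pow_sum, ← prod_mul_distrib]
  exact prod_congr rfl fun l _ => by ring

variable {Fq} [DecidableEq Fq]

theorem finsum_mem_monic_strictAnti {M : Type*} [CommSemiring M] {r : ℕ} (N : ℕ)
    (f : Fin r → Fq[X] → M) :
    ∑ᶠ a ∈ {a : Fin r → Fq[X] | (∀ l, (a l).Monic) ∧
        (∀ l l', l < l' → (a l').natDegree < (a l).natDegree) ∧ (∀ l, (a l).natDegree < N)},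
      ∏ l, f l (a l) =
    ∑ ι ∈ strictAntiIndices r N, ∏ l, ∑ b ∈ monicsOfDegree Fq (ι l), f l b := by
  have hset : {a : Fin r → Fq[X] | (∀ l, (a l).Monic) ∧
      (∀ l l', l < l' → (a l').natDegree < (a l).natDegree) ∧ (∀ l, (a l).natDegree < N)} =
      ↑((strictAntiIndices r N).biUnion fun ι =>
        Fintype.piFinset fun l => monicsOfDegree Fq (ι l)) := by
    ext a
    simp only [Set.mem_ofPred_eq, coe_biUnion, mem_coe, Set.mem_iUnion, Fintype.mem_piFinset,
      mem_monicsOfDegree, mem_strictAntiIndices, exists_prop]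
    constructor
    · rintro ⟨hmon, hanti, hdeg⟩
      exact ⟨fun l => (a l).natDegree, ⟨hanti, hdeg⟩, fun l => ⟨hmon l, rfl⟩⟩
    · rintro ⟨ι, ⟨hanti, hlt⟩, ha⟩
      simp only [(ha _).2]
      exact ⟨fun l => (ha l).1, hanti, hlt⟩
  rw [hset, finsum_mem_coe_finset, sum_biUnion]
  · exact sum_congr rfl fun ι _ => (prod_univ_sum _ _).symm
  · intro ι _ ι' _ hne
    refine disjoint_left.mpr fun a ha ha' => hne (funext fun l => ?_)
    rw [Fintype.mem_piFinset] at ha ha'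
    rw [← (mem_monicsOfDegree.mp (ha l)).2, (mem_monicsOfDegree.mp (ha' l)).2]

end MultipleSums

theorem finite_mzv_formula_P_component
    (H : ℕ → Polynomial (Polynomial Fq)) (hH : IsATFamily Fq H)
    (P : Polynomial Fq) (hPirr : Irreducible P)
    {r : ℕ} (s : Fin r → ℕ) (hs : ∀ l, 0 < s l)
    (hPΓ : ¬ P ∣ ∏ l, carlitzΓ Fq (s l)) :
    (∑ᶠ a ∈ {a : Fin r → Polynomial Fq |
        (∀ l, (a l).Monic) ∧ (∀ l l', l < l' → (a l').natDegree < (a l).natDegree) ∧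
        (∀ l, (a l).natDegree < P.natDegree)},
      ∏ l, Ring.inverse (Ideal.Quotient.mk (Ideal.span {P}) (a l)) ^ s l) =
    Ring.inverse (Ideal.Quotient.mk (Ideal.span {P}) (∏ l, carlitzΓ Fq (s l))) *
      ∑ᶠ j ∈ {j : Fin r → ℕ | ∀ l, j l ≤ (H (s l - 1)).natDegree},
        Ideal.Quotient.mk (Ideal.span {P}) ((X : Polynomial Fq) ^ (∑ l, j l)) *
          ∑ᶠ ι ∈ {ι : Fin r → ℕ |
              (∀ l l', l < l' → ι l' < ι l) ∧ (∀ l, ι l < P.natDegree)},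
            ∏ l,
              Ideal.Quotient.mk (Ideal.span {P}) ((H (s l - 1)).coeff (j l)) ^
                  (Fintype.card Fq) ^ ι l *
                Ring.inverse (Ideal.Quotient.mk (Ideal.span {P}) (carlitzL Fq (ι l))) ^ s l := by
  classical
  set π := Ideal.Quotient.mk (Ideal.span {P})
  have hjs : {j : Fin r → ℕ | ∀ l, j l ≤ (H (s l - 1)).natDegree} =
      ↑(Fintype.piFinset fun l => range ((H (s l - 1)).natDegree + 1)) := by
    ext; simp
  rw [finsum_mem_monic_strictAnti P.natDegree fun l b => Ring.inverse (π b) ^ s l, hjs,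
    ← coe_strictAntiIndices, finsum_mem_coe_finset]
  simp only [finsum_mem_coe_finset, map_pow]
  rw [sum_pow_mul_sum_prod_eq (π X) (fun l => (H (s l - 1)).natDegree) _
    (fun l k i => π ((H (s l - 1)).coeff k) ^ Fintype.card Fq ^ i)
    (fun l i => Ring.inverse (π (carlitzL Fq i)) ^ s l), mul_sum]
  refine sum_congr rfl fun ι hι => ?_
  rw [prod_congr rfl fun l _ => hH.sum_monicsOfDegree_inverse_pow hPirr
    ((mem_strictAntiIndices.mp hι).2 l) (hs l)
    fun h => hPΓ (h.trans (dvd_prod_of_mem _ (mem_univ l)))]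
  have : (Ideal.span {P}).IsMaximal := PrincipalIdealRing.isMaximal_of_irreducible hPirr
  let _ : Field (Fq[X] ⧸ Ideal.span {P}) := Ideal.Quotient.field _
  simp only [Ring.inverse_eq_inv, map_prod, ← prod_inv_distrib, ← prod_mul_distrib, twistEval,
    map_sum, map_mul, map_pow]
  exact prod_congr rfl fun l _ => by ring
end
end

section
/- (Coefficient bound for Anderson–Thakur polynomials) Write H_{s−1} = Σ_{j=0}^{m} u_j t^j ∈ A[t] with u_m ≠ 0. Then each coefficient satisfies deg_θ u_j < sq/(q−1), i.e. (q−1)·deg_θ u_j < sq. -/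
open Polynomial

noncomputable section

variable (Fq : Type) [Field Fq] [Fintype Fq]

/-!
Comparing the coefficients of `x^N` in the generating identity expresses `H_N / Γ_{N+1}|_{θ=t}` as
`∑_{q^i ≤ N} (G_i / D_i|_{θ=t}) · (H_{N-q^i} / Γ_{N-q^i+1}|_{θ=t})`. All denominators lie in
`F_q[t]`, so clearing them changes no `θ`-degree, and `deg_θ H_N ≤ deg_θ G_i + deg_θ H_{N-q^i}` for
some `i` with `q^i ≤ N`. As `deg_θ G_i ≤ q + ⋯ + q^i = (q^{i+1} - q)/(q - 1)`, strong induction on `N`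
gives `(q - 1) deg_θ H_N < (N + 1) q`, and `deg_θ H_N` bounds the degree of every `t`-coefficient.
-/

theorem IsFractionRing.mul_prod_eq_sum_of_div_eq_sum_div {R K ι : Type*} [CommRing R] [Field K]
    [Algebra R K] [IsFractionRing R K] [DecidableEq ι] {x d : R} {s : Finset ι} {a e : ι → R}
    (hd : d ≠ 0) (he : ∀ i ∈ s, e i ≠ 0)
    (h : algebraMap R K x / algebraMap R K d =
      ∑ i ∈ s, algebraMap R K (a i) / algebraMap R K (e i)) :
    x * ∏ i ∈ s, e i = ∑ i ∈ s, a i * (d * ∏ j ∈ s.erase i, e j) := by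
  have hinj := IsFractionRing.injective R K
  apply hinj
  have hd' : algebraMap R K d ≠ 0 := (map_ne_zero_iff _ hinj).mpr hd
  rw [div_eq_iff hd'] at h
  simp only [map_mul, map_prod, map_sum, h, Finset.sum_mul]
  refine Finset.sum_congr rfl fun i hi => ?_
  have he' : algebraMap R K (e i) ≠ 0 := (map_ne_zero_iff _ hinj).mpr (he i hi)
  rw [← Finset.mul_prod_erase s _ hi]
  field_simp

theorem MvPolynomial.degreeOf_le_sup_of_div_eq_sum_div {σ R K ι : Type*} [CommRing R] [IsDomain R]
    [Field K] [Algebra (MvPolynomial σ R) K] [IsFractionRing (MvPolynomial σ R) K]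
    (n : σ) {x d : MvPolynomial σ R} {s : Finset ι} {a e : ι → MvPolynomial σ R}
    (hd : d ≠ 0) (hd₀ : degreeOf n d = 0) (he : ∀ i ∈ s, e i ≠ 0)
    (he₀ : ∀ i ∈ s, degreeOf n (e i) = 0)
    (h : algebraMap _ K x / algebraMap _ K d =
      ∑ i ∈ s, algebraMap _ K (a i) / algebraMap _ K (e i)) :
    degreeOf n x ≤ s.sup fun i => degreeOf n (a i) := by
  classical
  rcases eq_or_ne x 0 with rfl | hx
  · simp
  have hprod : ∀ t ⊆ s, degreeOf n (∏ i ∈ t, e i) = 0 := fun t ht =>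
    Nat.le_zero.mp <| (degreeOf_prod_le n t e).trans
      (Finset.sum_eq_zero fun i hi => he₀ i (ht hi)).le
  calc degreeOf n x
      = degreeOf n (x * ∏ i ∈ s, e i) := by
        rw [degreeOf_mul_eq hx (Finset.prod_ne_zero_iff.mpr he), hprod s subset_rfl, add_zero]
    _ = degreeOf n (∑ i ∈ s, a i * (d * ∏ j ∈ s.erase i, e j)) := by
        rw [IsFractionRing.mul_prod_eq_sum_of_div_eq_sum_div hd he h]
    _ ≤ s.sup fun i => degreeOf n (a i) := by
        refine (degreeOf_sum_le n s _).trans (Finset.sup_mono_fun fun i hi => ?_)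
        refine (degreeOf_mul_le n _ _).trans
          ((add_le_add_right (degreeOf_mul_le n _ _) _).trans ?_)
        rw [hd₀, hprod _ (Finset.erase_subset i s), add_zero, add_zero]

section

variable (K : Type) [Field K]

theorem degreeOf_toSt (p : Polynomial K) : MvPolynomial.degreeOf 0 (toSt K p) = 0 := by
  induction p using Polynomial.induction_on' with
  | add p q hp hq =>
    rw [map_add]
    exact Nat.le_zero.mp ((MvPolynomial.degreeOf_add_le 0 _ _).trans (by rw [hp, hq]; rfl))
  | monomial k a =>
    have : toSt K (monomial k a) = MvPolynomial.C a * MvPolynomial.X 1 ^ k := by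
      rw [toSt, coe_eval₂RingHom, eval₂_monomial, tS]
    rw [this]
    exact Nat.le_zero.mp ((MvPolynomial.degreeOf_C_mul_le _ 0 a).trans
      (MvPolynomial.degreeOf_X_pow_of_ne (R := K) (i := (0 : Fin 2)) k (by decide)).le)

theorem toS₂_monomial_monomial (n m : ℕ) (c : K) : toS₂ K (monomial n (monomial m c)) =
    MvPolynomial.monomial (Finsupp.single 0 m + Finsupp.single 1 n) c := by
  rw [toS₂, coe_eval₂RingHom, eval₂_monomial, toSθ, coe_eval₂RingHom, eval₂_monomial, θS, tS,
    MvPolynomial.X_pow_eq_monomial, MvPolynomial.X_pow_eq_monomial, MvPolynomial.C_mul_monomial,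
    MvPolynomial.monomial_mul, mul_one, mul_one]

theorem Finsupp.single_zero_add_single_one_inj {m n k j : ℕ} :
    (Finsupp.single 0 m + Finsupp.single 1 n : Fin 2 →₀ ℕ) =
      Finsupp.single 0 k + Finsupp.single 1 j ↔ m = k ∧ n = j := by
  refine ⟨fun h => ⟨?_, ?_⟩, fun h => by rw [h.1, h.2]⟩
  · simpa using DFunLike.congr_fun h 0
  · simpa using DFunLike.congr_fun h 1

theorem coeff_toS₂ (P : Polynomial (Polynomial K)) (j k : ℕ) :
    MvPolynomial.coeff (Finsupp.single 0 k + Finsupp.single 1 j) (toS₂ K P) =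
      (P.coeff j).coeff k := by
  induction P using Polynomial.induction_on' with
  | add P Q hP hQ => simp [hP, hQ]
  | monomial n u =>
    induction u using Polynomial.induction_on' with
    | add u v hu hv => simp_all
    | monomial m c =>
      simp only [toS₂_monomial_monomial, MvPolynomial.coeff_monomial, coeff_monomial,
        Finsupp.single_zero_add_single_one_inj]
      by_cases hn : n = j <;> by_cases hm : m = k <;> simp [hn, hm, coeff_monomial]

theorem natDegree_coeff_le_degreeOf_toS₂ (P : Polynomial (Polynomial K)) (j : ℕ) :
    (P.coeff j).natDegree ≤ MvPolynomial.degreeOf 0 (toS₂ K P) := by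
  rcases eq_or_ne (P.coeff j) 0 with h | h
  · simp [h]
  refine le_of_eq_of_le (by simp) (MvPolynomial.monomial_le_degreeOf 0
    (m := Finsupp.single 0 (P.coeff j).natDegree + Finsupp.single 1 j) ?_)
  rw [MvPolynomial.mem_support_iff, coeff_toS₂]
  exact leadingCoeff_ne_zero.mpr h

theorem toS₂_map_C (p : Polynomial K) : toS₂ K (p.map C) = toSt K p := by
  simp [toS₂, toSt, toSθ, eval₂_map]

theorem toSt_injective : Function.Injective (toSt K) := by
  refine (injective_iff_map_eq_zero _).mpr fun p hp => ext fun j => ?_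
  have := congrArg (MvPolynomial.coeff (Finsupp.single 0 0 + Finsupp.single 1 j)) hp
  rwa [← toS₂_map_C, coeff_toS₂, coeff_map, coeff_C_zero, MvPolynomial.coeff_zero] at this

end

theorem Nat.sub_one_mul_sum_Icc_pow_add (q i : ℕ) :
    (q - 1) * ∑ m ∈ Finset.Icc 1 i, q ^ m + q = q ^ (i + 1) := by
  induction i with
  | zero => simp
  | succ i ih =>
    rw [Finset.sum_Icc_succ_top (Nat.le_add_left 1 i), mul_add, add_right_comm, ih]
    rcases q with _ | q
    · simp
    · rw [Nat.add_sub_cancel, pow_succ _ (i + 1)]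
      ring

section

variable {Fq}

local notation "q" => Fintype.card Fq

theorem carlitzD_ne_zero (i : ℕ) : carlitzD Fq i ≠ 0 := by
  refine Finset.prod_ne_zero_iff.mpr fun j hj => sub_ne_zero.mpr fun h => ?_
  have := congrArg natDegree h
  simp only [natDegree_X_pow] at this
  exact (Nat.pow_lt_pow_right Fintype.one_lt_card (Finset.mem_range.mp hj)).ne' this

theorem carlitzΓ_ne_zero (m : ℕ) : carlitzΓ Fq m ≠ 0 :=
  Finset.prod_ne_zero_iff.mpr fun i _ => pow_ne_zero _ (carlitzD_ne_zero i)

theorem degreeOf_ATG_le (i : ℕ) :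
    MvPolynomial.degreeOf 0 (ATG Fq i) ≤ ∑ m ∈ Finset.Icc 1 i, q ^ m := by
  refine (MvPolynomial.degreeOf_prod_le _ _ _).trans (Finset.sum_le_sum fun m _ => ?_)
  refine (MvPolynomial.degreeOf_sub_le _ _ _).trans (max_le ?_ ?_)
  · rw [tS, MvPolynomial.degreeOf_X_pow_of_ne _ (by decide)]
    exact Nat.zero_le _
  · rw [θS, MvPolynomial.degreeOf_X_self_pow]

namespace IsATFamily

variable {H : ℕ → Polynomial (Polynomial Fq)}

theorem toS₂_zero (hH : IsATFamily Fq H) : toS₂ Fq (H 0) = 1 := by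
  have h0 : ιF Fq (toS₂ Fq (H 0)) = 1 := by
    simpa [carlitzΓ] using congrArg PowerSeries.constantCoeff hH
  exact IsFractionRing.injective (ATRing Fq) (FractionRing (ATRing Fq))
    (h0.trans (map_one (ιF Fq)).symm)

theorem div_eq_sum (hH : IsATFamily Fq H) {N : ℕ} (hN : N ≠ 0) :
    ιF Fq (toS₂ Fq (H N)) / ιF Fq (toSt Fq (carlitzΓ Fq (N + 1))) =
      ∑ k ∈ Finset.range (N + 1),
        (∑ i ∈ Finset.range (k + 1),
          if q ^ i = k then ιF Fq (ATG Fq i) / ιF Fq (toSt Fq (carlitzD Fq i)) else 0) *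
        (ιF Fq (toS₂ Fq (H (N - k))) / ιF Fq (toSt Fq (carlitzΓ Fq (N - k + 1)))) := by
  have hN' := congrArg (PowerSeries.coeff N) hH
  rw [sub_mul, one_mul, map_sub, PowerSeries.coeff_one, if_neg hN, sub_eq_zero,
    PowerSeries.coeff_mul, Finset.Nat.sum_antidiagonal_eq_sum_range_succ_mk] at hN'
  simpa only [PowerSeries.coeff_mk] using hN'

theorem exists_degreeOf_le (hH : IsATFamily Fq H) {N : ℕ} (hN : N ≠ 0) :
    ∃ i, q ^ i ≤ N ∧ MvPolynomial.degreeOf 0 (toS₂ Fq (H N)) ≤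
      MvPolynomial.degreeOf 0 (ATG Fq i) + MvPolynomial.degreeOf 0 (toS₂ Fq (H (N - q ^ i))) := by
  classical
  set S := (Finset.range (N + 1)).sigma fun k => Finset.range (k + 1)
  set a : (Σ _ : ℕ, ℕ) → ATRing Fq := fun p =>
    if q ^ p.2 = p.1 then ATG Fq p.2 * toS₂ Fq (H (N - p.1)) else 0
  set b : (Σ _ : ℕ, ℕ) → Polynomial Fq := fun p => carlitzD Fq p.2 * carlitzΓ Fq (N - p.1 + 1)
  have hsum : ιF Fq (toS₂ Fq (H N)) / ιF Fq (toSt Fq (carlitzΓ Fq (N + 1))) =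
      ∑ p ∈ S, ιF Fq (a p) / ιF Fq (toSt Fq (b p)) := by
    rw [hH.div_eq_sum hN]
    simp_rw [Finset.sum_mul]
    rw [Finset.sum_sigma']
    refine Finset.sum_congr rfl fun p _ => ?_
    split_ifs <;> simp [a, b, *, div_mul_div_comm]
  have hne : ∀ c ≠ 0, toSt Fq c ≠ 0 := fun c hc => (map_ne_zero_iff _ (toSt_injective Fq)).mpr hc
  have hdeg := MvPolynomial.degreeOf_le_sup_of_div_eq_sum_div 0
    (hne _ (carlitzΓ_ne_zero _)) (degreeOf_toSt Fq _)
    (fun p _ => hne _ (mul_ne_zero (carlitzD_ne_zero _) (carlitzΓ_ne_zero _)))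
    (fun p _ => degreeOf_toSt Fq _) hsum
  obtain ⟨⟨k, i⟩, hp, hmax⟩ := Finset.exists_mem_eq_sup S ⟨⟨1, 0⟩, by simp [S]; omega⟩
    fun p => MvPolynomial.degreeOf 0 (a p)
  rw [hmax] at hdeg
  simp only [S, Finset.mem_sigma, Finset.mem_range] at hp
  by_cases hk : q ^ i = k
  · subst hk
    refine ⟨i, by omega, hdeg.trans ?_⟩
    simpa [a] using MvPolynomial.degreeOf_mul_le 0 _ _
  · refine ⟨0, by simp; omega, ?_⟩
    rw [show a ⟨k, i⟩ = 0 from if_neg hk, MvPolynomial.degreeOf_zero] at hdeg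
    exact hdeg.trans (Nat.zero_le _)

theorem sub_one_mul_degreeOf_lt (hH : IsATFamily Fq H) (N : ℕ) :
    (q - 1) * MvPolynomial.degreeOf 0 (toS₂ Fq (H N)) < (N + 1) * q := by
  induction N using Nat.strong_induction_on with
  | _ N ih =>
  rcases eq_or_ne N 0 with rfl | hN
  · simp [hH.toS₂_zero, Fintype.card_pos]
  obtain ⟨i, hi, hdeg⟩ := hH.exists_degreeOf_le hN
  have hpos : 0 < q ^ i := pow_pos Fintype.card_pos i
  have hrest := ih (N - q ^ i) (by omega)
  have hATG := Nat.mul_le_mul_left (q - 1) (degreeOf_ATG_le (Fq := Fq) i)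
  have hgeom : (q - 1) * ∑ m ∈ Finset.Icc 1 i, q ^ m + q = q ^ i * q := by
    rw [← pow_succ]
    exact Nat.sub_one_mul_sum_Icc_pow_add q i
  have hsplit : (N - q ^ i + 1) * q + q ^ i * q = (N + 1) * q := by
    rw [← add_mul]
    congr 1
    omega
  have hmul := Nat.mul_le_mul_left (q - 1) hdeg
  rw [mul_add] at hmul
  omega

end IsATFamily

end

/-- coefficient bound for Anderson–Thakur polynomials. Writing
`H_{s-1} = Σ_j u_j t^j ∈ A[t]`, each coefficient satisfies `deg_θ u_j < sq/(q-1)`,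
i.e. `(q - 1) · deg_θ u_j < s·q`. -/
theorem anderson_thakur_coeff_bound
    (H : ℕ → Polynomial (Polynomial Fq)) (hH : IsATFamily Fq H)
    (s : ℕ) (hs : 0 < s) (j : ℕ) :
    (Fintype.card Fq - 1) * ((H (s - 1)).coeff j).natDegree < s * Fintype.card Fq := by
  have hbound := hH.sub_one_mul_degreeOf_lt (s - 1)
  rw [Nat.sub_add_cancel hs] at hbound
  exact (Nat.mul_le_mul_left _ (natDegree_coeff_le_degreeOf_toS₂ Fq _ j)).trans_lt hbound
end
end
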